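/- Under the paired matrix Gaussian model, for all 1 ≤ i', j' ≤ p, 1 ≤ l_1, l_2 ≤ q, and every k, the cross-sample error covariance factorizes: Cov(ε^{(1)}_{k,i',l_1}, ε^{(2)}_{k,j',l_2}) = P_{T_{1,2},l_1,l_2} · Ω_{S_1,i',·} Σ_{S_{1,2}} Ω_{S_2,·,j'} / (ω_{S_1,i',i'} ω_{S_2,j',j'}); equivalently, corr(ε^{(1)}_{k,i',l_1}, ε^{(2)}_{k,j',l_2}) = P_{T_{1,2},l_1,l_2} · ρ_{S_{1,2},i',j'}. -/

import Mathlib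

open Filter Matrix
open scoped BigOperators ENNReal

noncomputable section

/-- A family of real random variables is centered jointly Gaussian with covariance matrix `C`
if every linear combination has the centered one-dimensional Gaussian law with the
corresponding variance. -/
def IsCenteredGaussianFamily {Ω : Type*} [MeasurableSpace Ω] (μ : MeasureTheory.Measure Ω)
    {ι : Type*} [Fintype ι] (Z : ι → Ω → ℝ) (C : Matrix ι ι ℝ) : Prop :=
  ∀ a : ι → ℝ,
    μ.map (fun ω => ∑ i, a i * Z i ω)
      = ProbabilityTheory.gaussianReal 0 (Real.toNNReal (∑ i, ∑ j, a i * C i j * a j))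

/-- The covariance matrix of the stacked vector `(vec X⁽¹⁾, vec X⁽²⁾)` in the paired
matrix Gaussian model, with diagonal blocks `Σ_{S_t} ⊗ Σ_{T_t}` and off-diagonal blocks
`Σ_{S_{1,2}} ⊗ Σ_{T_{1,2}}` (and its transpose). -/
def pairCov {p q : ℕ} (S1 S2 S12 : Matrix (Fin p) (Fin p) ℝ)
    (T1 T2 T12 : Matrix (Fin q) (Fin q) ℝ) :
    Matrix (Fin 2 × Fin p × Fin q) (Fin 2 × Fin p × Fin q) ℝ :=
  Matrix.of fun a b =>
    if a.1 = 0 then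
      (if b.1 = 0 then S1 a.2.1 b.2.1 * T1 a.2.2 b.2.2
       else S12 a.2.1 b.2.1 * T12 a.2.2 b.2.2)
    else
      (if b.1 = 0 then S12 b.2.1 a.2.1 * T12 b.2.2 a.2.2
       else S2 a.2.1 b.2.1 * T2 a.2.2 b.2.2)

/-- Covariance of two real random variables. -/
def cov {Ω : Type*} [MeasurableSpace Ω] (μ : MeasureTheory.Measure Ω) (f g : Ω → ℝ) : ℝ :=
  ∫ ω, (f ω - ∫ x, f x ∂μ) * (g ω - ∫ x, g x ∂μ) ∂μ

/-- Pearson correlation of two real random variables. -/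
def corr {Ω : Type*} [MeasurableSpace Ω] (μ : MeasureTheory.Measure Ω) (f g : Ω → ℝ) : ℝ :=
  cov μ f g / Real.sqrt (ProbabilityTheory.variance f μ * ProbabilityTheory.variance g μ)

/-- Squared Frobenius norm of a matrix. -/
def frobSq {m : ℕ} (A : Matrix (Fin m) (Fin m) ℝ) : ℝ := ∑ i, ∑ j, (A i j) ^ 2

/-- Matrix 1-norm `max_j ∑_i |a_{i,j}|`. -/
def L1norm {m : ℕ} (A : Matrix (Fin m) (Fin m) ℝ) : ℝ := ⨆ j, ∑ i, |A i j|

/-- Spectral (operator) norm of a matrix. -/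
def specNorm {m : ℕ} (A : Matrix (Fin m) (Fin m) ℝ) : ℝ :=
  ⨆ v : {v : Fin m → ℝ // v ⬝ᵥ v ≤ 1}, Real.sqrt (A.mulVec v ⬝ᵥ A.mulVec v)

/-- Standard normal cumulative distribution function. -/
def Phi (x : ℝ) : ℝ := ((ProbabilityTheory.gaussianReal 0 1) (Set.Iic x)).toReal

/-- The square root of a positive semidefinite matrix (the definition `Matrix.PosSemidef.sqrt`
of the older Mathlib, which has since been removed). -/
def Matrix.PosSemidef.sqrt {n : Type*} [Fintype n] [DecidableEq n]
    {A : Matrix n n ℝ} (hA : A.PosSemidef) : Matrix n n ℝ :=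
  hA.1.eigenvectorUnitary.1 * diagonal (Real.sqrt ∘ hA.1.eigenvalues)
    * (star hA.1.eigenvectorUnitary : Matrix n n ℝ)

/-- The paired matrix Gaussian model: `n` i.i.d. pairs of `p × q` random matrices whose
stacked vectors are centered Gaussian with separable (Kronecker) covariance structure. -/
structure PairedModel where
  n : ℕ
  p : ℕ
  q : ℕ
  npos : 0 < n
  ppos : 0 < p
  qpos : 0 < q
  Ω : Type
  [mΩ : MeasurableSpace Ω]
  μ : MeasureTheory.Measure Ω
  probμ : MeasureTheory.IsProbabilityMeasure μ
  SigS : Fin 2 → Matrix (Fin p) (Fin p) ℝ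
  SigT : Fin 2 → Matrix (Fin q) (Fin q) ℝ
  SigS12 : Matrix (Fin p) (Fin p) ℝ
  SigT12 : Matrix (Fin q) (Fin q) ℝ
  hSigS : ∀ t, (SigS t).PosDef
  hSigT : ∀ t, (SigT t).PosDef
  hSig : (pairCov (SigS 0) (SigS 1) SigS12 (SigT 0) (SigT 1) SigT12).PosSemidef
  X : Fin n → Fin 2 → Ω → Matrix (Fin p) (Fin q) ℝ
  measX : ∀ k t i l, Measurable fun ω => X k t ω i l
  gaussX : ∀ k, IsCenteredGaussianFamily μ
      (fun tl ω => X k tl.1 ω tl.2.1 tl.2.2)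
      (pairCov (SigS 0) (SigS 1) SigS12 (SigT 0) (SigT 1) SigT12)
  iidX : ProbabilityTheory.iIndepFun
      (fun k ω (tl : Fin 2 × Fin p × Fin q) => X k tl.1 ω tl.2.1 tl.2.2) μ
  identX : ∀ k k' : Fin n, ProbabilityTheory.IdentDistrib
      (fun ω (tl : Fin 2 × Fin p × Fin q) => X k tl.1 ω tl.2.1 tl.2.2)
      (fun ω (tl : Fin 2 × Fin p × Fin q) => X k' tl.1 ω tl.2.1 tl.2.2) μ μ

attribute [instance] PairedModel.mΩ PairedModel.probμ

namespace PairedModel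

variable (M : PairedModel)

/-- `Σ_{T_t}^{-1/2}`. -/
def invSqrtT (t : Fin 2) : Matrix (Fin M.q) (Fin M.q) ℝ := ((M.hSigT t).posSemidef.sqrt)⁻¹

/-- `P_{T_{1,2}} = Σ_{T_1}^{-1/2} Σ_{T_{1,2}} Σ_{T_2}^{-1/2}`. -/
def PT12 : Matrix (Fin M.q) (Fin M.q) ℝ := M.invSqrtT 0 * M.SigT12 * M.invSqrtT 1

/-- Spatial precision matrices `Ω_{S_t} = Σ_{S_t}⁻¹`. -/
def ΩS (t : Fin 2) : Matrix (Fin M.p) (Fin M.p) ℝ := (M.SigS t)⁻¹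

/-- The whitened observations `Y_k^{(t)} = X_k^{(t)} Σ_{T_t}^{-1/2}`. -/
def Y (k : Fin M.n) (t : Fin 2) (ω : M.Ω) : Matrix (Fin M.p) (Fin M.q) ℝ :=
  M.X k t ω * M.invSqrtT t

/-- Population regression coefficients `β_i^{(t)}`, as `β^{(t)}_{i,j} = -ω_{S_t,i,j}/ω_{S_t,i,i}`
for `j ≠ i` (the value at `j = i` is irrelevant). -/
def β (t : Fin 2) (i j : Fin M.p) : ℝ := -(M.ΩS t i j) / M.ΩS t i i

/-- Regression errors `ε^{(t)}_{k,i,l} = Y^{(t)}_{k,i,l} − Σ_{j ≠ i} β^{(t)}_{i,j} Y^{(t)}_{k,j,l}`. -/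
def ε (k : Fin M.n) (t : Fin 2) (i : Fin M.p) (l : Fin M.q) (ω : M.Ω) : ℝ :=
  M.Y k t ω i l - ∑ j ∈ Finset.univ.erase i, M.β t i j * M.Y k t ω j l

/-- `r^{(t)}_{i,j} = ω_{S_t,i,j}/(ω_{S_t,i,i} ω_{S_t,j,j})`. -/
def r (t : Fin 2) (i j : Fin M.p) : ℝ := M.ΩS t i j / (M.ΩS t i i * M.ΩS t j j)

/-- `ρ^{(t)}_{i,j} = r^{(t)}_{i,j}/(r^{(t)}_{i,i} r^{(t)}_{j,j})^{1/2}`. -/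
def ρ (t : Fin 2) (i j : Fin M.p) : ℝ := M.r t i j / Real.sqrt (M.r t i i * M.r t j j)

/-- Partial correlations `ρ_{S_t,i,j} = ω_{S_t,i,j}/(ω_{S_t,i,i} ω_{S_t,j,j})^{1/2}`. -/
def ρS (t : Fin 2) (i j : Fin M.p) : ℝ :=
  M.ΩS t i j / Real.sqrt (M.ΩS t i i * M.ΩS t j j)

/-- `U^{(t)}_{i,j}`. -/
def U (t : Fin 2) (i j : Fin M.p) (ω : M.Ω) : ℝ :=
  (1 / (M.n * M.q : ℝ)) * ∑ k, ∑ l,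
    (M.ε k t i l ω * M.ε k t j l ω - ∫ ω', M.ε k t i l ω' * M.ε k t j l ω' ∂M.μ)

/-- `Ũ^{(t)}_{i,j} = (r^{(t)}_{i,j} − U^{(t)}_{i,j})/(r^{(t)}_{i,i} r^{(t)}_{j,j})^{1/2}`. -/
def Utilde (t : Fin 2) (i j : Fin M.p) (ω : M.Ω) : ℝ :=
  (M.r t i j - M.U t i j ω) / Real.sqrt (M.r t i i * M.r t j j)

/-- `θ^{(t)}_{i,j} = Var(Ũ^{(t)}_{i,j})`. -/
def θ (t : Fin 2) (i j : Fin M.p) : ℝ := ProbabilityTheory.variance (M.Utilde t i j) M.μ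

/-- `Θ_{i,j} = Var(Ũ^{(1)}_{i,j} − Ũ^{(2)}_{i,j})`. -/
def Θ (i j : Fin M.p) : ℝ :=
  ProbabilityTheory.variance (fun ω => M.Utilde 0 i j ω - M.Utilde 1 i j ω) M.μ

/-- `ρ_{S_{1,2},i,j} = (r^{(1)}_{i,i} r^{(2)}_{j,j})^{1/2} · Ω_{S_1,i,·} Σ_{S_{1,2}} Ω_{S_2,·,j}`. -/
def ρS12 (i j : Fin M.p) : ℝ :=
  Real.sqrt (M.r 0 i i * M.r 1 j j) * ∑ a, ∑ b, M.ΩS 0 i a * M.SigS12 a b * M.ΩS 1 b j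

/-- Assumption (A1), with constants `c0, c1, c2`: the eigenvalues of the spatial and temporal
precision matrices lie in `[c0⁻¹, c0]`; the scaled operator norms of `P_{T_{1,2}}` and
`Σ_{S_{1,2}}` are bounded by `c1`; and `|tr(P_{T_{1,2}}) tr(Σ_{S_{1,2}})|/(pq) ≥ c2`. -/
def A1 (c0 c1 c2 : ℝ) : Prop :=
  (∀ t : Fin 2, ∀ v : Fin M.p → ℝ,
      c0⁻¹ * (v ⬝ᵥ v) ≤ v ⬝ᵥ (M.ΩS t).mulVec v ∧ v ⬝ᵥ (M.ΩS t).mulVec v ≤ c0 * (v ⬝ᵥ v)) ∧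
  (∀ t : Fin 2, ∀ v : Fin M.q → ℝ,
      c0⁻¹ * (v ⬝ᵥ v) ≤ v ⬝ᵥ ((M.SigT t)⁻¹).mulVec v ∧
        v ⬝ᵥ ((M.SigT t)⁻¹).mulVec v ≤ c0 * (v ⬝ᵥ v)) ∧
  (∀ v : Fin M.q → ℝ,
      |Matrix.trace M.SigS12| / M.p * Real.sqrt (M.PT12.mulVec v ⬝ᵥ M.PT12.mulVec v)
        ≤ c1 * Real.sqrt (v ⬝ᵥ v)) ∧
  (∀ v : Fin M.p → ℝ,
      |Matrix.trace M.PT12| / M.q * Real.sqrt (M.SigS12.mulVec v ⬝ᵥ M.SigS12.mulVec v)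
        ≤ c1 * Real.sqrt (v ⬝ᵥ v)) ∧
  c2 ≤ |Matrix.trace M.PT12 * Matrix.trace M.SigS12| / (M.p * M.q)

end PairedModel


namespace PairedModel

variable (M : PairedModel)

/-- Sample means `Ȳ^{(t)}_i` of the whitened data. -/
def Ybar (t : Fin 2) (i : Fin M.p) (ω : M.Ω) : ℝ :=
  (1 / (M.n * M.q : ℝ)) * ∑ k, ∑ l, M.Y k t ω i l

/-- Residuals `ε̂^{(t)}_{k,i,l}` built from estimated regression coefficients `b`. -/
def εhat (b : Fin 2 → Fin M.p → M.Ω → Fin M.p → ℝ) (k : Fin M.n) (t : Fin 2)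
    (i : Fin M.p) (l : Fin M.q) (ω : M.Ω) : ℝ :=
  M.Y k t ω i l - M.Ybar t i ω
    - ∑ j ∈ Finset.univ.erase i, b t i ω j * (M.Y k t ω j l - M.Ybar t j ω)

/-- `r̃^{(t)}_{i,j}`, the sample covariance of the residuals. -/
def rtil (b : Fin 2 → Fin M.p → M.Ω → Fin M.p → ℝ) (t : Fin 2) (i j : Fin M.p) (ω : M.Ω) : ℝ :=
  (1 / (M.n * M.q : ℝ)) * ∑ k, ∑ l, M.εhat b k t i l ω * M.εhat b k t j l ω

/-- Bias-corrected estimator `r̂^{(t)}_{i,j}` (for `i = j` it is `r̃^{(t)}_{i,i}`, for `i ≠ j`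
it is the bias-corrected formula, used for `i < j`). -/
def rhat (b : Fin 2 → Fin M.p → M.Ω → Fin M.p → ℝ) (t : Fin 2) (i j : Fin M.p) (ω : M.Ω) : ℝ :=
  if i = j then M.rtil b t i i ω
  else -(M.rtil b t i j ω + M.rtil b t i i ω * b t i ω j + M.rtil b t j j ω * b t j ω i)

/-- `θ̂^{(t)}_{i,j}`. -/
def θhat (b : Fin 2 → Fin M.p → M.Ω → Fin M.p → ℝ) (t : Fin 2) (i j : Fin M.p) (ω : M.Ω) : ℝ :=
  (1 / (M.n * M.q : ℝ)) * (1 + (b t i ω j) ^ 2 * M.rhat b t i i ω / M.rhat b t j j ω)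

/-- `ϱ̂^{(1,2)}_{i,j}`. -/
def ϱhat (b : Fin 2 → Fin M.p → M.Ω → Fin M.p → ℝ) (i j : Fin M.p) (ω : M.Ω) : ℝ :=
  ((1 / (M.n * M.q : ℝ)) * ∑ k, ∑ l, M.εhat b k 0 i l ω * M.εhat b k 1 j l ω)
    / Real.sqrt (M.rhat b 0 i i ω * M.rhat b 1 j j ω)

/-- The variance-corrected estimator `Θ̂_{i,j}` (temporal covariances known). -/
def Θhat (b : Fin 2 → Fin M.p → M.Ω → Fin M.p → ℝ) (i j : Fin M.p) (ω : M.Ω) : ℝ :=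
  M.θhat b 0 i j ω + M.θhat b 1 i j ω
    - (2 / (M.n * M.q : ℝ))
      * (M.ϱhat b i i ω * M.ϱhat b j j ω + M.ϱhat b i j ω * M.ϱhat b j i ω)
      * ((M.q : ℝ) * frobSq M.PT12 / (Matrix.trace M.PT12) ^ 2)

/-- `ρ̂_{S_t,i,j}`. -/
def ρShat (b : Fin 2 → Fin M.p → M.Ω → Fin M.p → ℝ) (t : Fin 2) (i j : Fin M.p) (ω : M.Ω) : ℝ :=
  M.rhat b t i j ω / Real.sqrt (M.rhat b t i i ω * M.rhat b t j j ω)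

/-- The paired-test statistic `W_{i,j}` (temporal covariances known). -/
def W (b : Fin 2 → Fin M.p → M.Ω → Fin M.p → ℝ) (i j : Fin M.p) (ω : M.Ω) : ℝ :=
  (M.ρShat b 0 i j ω - M.ρShat b 1 i j ω) / Real.sqrt (M.Θhat b i j ω)

section DataDriven

variable (R : Fin 2 → M.Ω → Matrix (Fin M.q) (Fin M.q) ℝ)
variable (b : Fin 2 → Fin M.p → M.Ω → Fin M.p → ℝ)

/-- Data-driven whitened observations `Y_k^{(t,d)} = X_k^{(t)} Σ̂_{T_t}^{-1/2}`, where
`R t ω` is the (random) estimator `Σ̂_{T_t}^{-1/2}`. -/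
def Yd (k : Fin M.n) (t : Fin 2) (ω : M.Ω) : Matrix (Fin M.p) (Fin M.q) ℝ :=
  M.X k t ω * R t ω

/-- Sample means of the data-driven whitened data. -/
def Ybard (t : Fin 2) (i : Fin M.p) (ω : M.Ω) : ℝ :=
  (1 / (M.n * M.q : ℝ)) * ∑ k, ∑ l, M.Yd R k t ω i l

/-- Data-driven residuals `ε̂^{(t,d)}_{k,i,l}`. -/
def εhatd (k : Fin M.n) (t : Fin 2) (i : Fin M.p) (l : Fin M.q) (ω : M.Ω) : ℝ :=
  M.Yd R k t ω i l - M.Ybard R t i ω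
    - ∑ j ∈ Finset.univ.erase i, b t i ω j * (M.Yd R k t ω j l - M.Ybard R t j ω)

/-- `r̃^{(t,d)}_{i,j}`. -/
def rtild (t : Fin 2) (i j : Fin M.p) (ω : M.Ω) : ℝ :=
  (1 / (M.n * M.q : ℝ)) * ∑ k, ∑ l, M.εhatd R b k t i l ω * M.εhatd R b k t j l ω

/-- `r̂^{(t,d)}_{i,j}`. -/
def rhatd (t : Fin 2) (i j : Fin M.p) (ω : M.Ω) : ℝ :=
  if i = j then M.rtild R b t i i ω
  else -(M.rtild R b t i j ω + M.rtild R b t i i ω * b t i ω j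
          + M.rtild R b t j j ω * b t j ω i)

/-- `θ̂^{(t,d)}_{i,j}`. -/
def θhatd (t : Fin 2) (i j : Fin M.p) (ω : M.Ω) : ℝ :=
  (1 / (M.n * M.q : ℝ)) * (1 + (b t i ω j) ^ 2 * M.rhatd R b t i i ω / M.rhatd R b t j j ω)

/-- `ϱ̂^{(1,2,d)}_{i,j}`. -/
def ϱhatd (i j : Fin M.p) (ω : M.Ω) : ℝ :=
  ((1 / (M.n * M.q : ℝ)) * ∑ k, ∑ l, M.εhatd R b k 0 i l ω * M.εhatd R b k 1 j l ω)
    / Real.sqrt (M.rhatd R b 0 i i ω * M.rhatd R b 1 j j ω)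

/-- Row-pooled means of the data-driven whitened data. -/
def YbarRowd (t : Fin 2) (l : Fin M.q) (ω : M.Ω) : ℝ :=
  (1 / (M.n * M.p : ℝ)) * ∑ k, ∑ i, M.Yd R k t ω i l

/-- The pooled estimator `P̂^{(d)}_{T_{1,2}}`. -/
def Phatd (ω : M.Ω) : Matrix (Fin M.q) (Fin M.q) ℝ :=
  Matrix.of fun l1 l2 =>
    (1 / (M.n * M.p : ℝ)) * ∑ k, ∑ i,
      (M.Yd R k 0 ω i l1 - M.YbarRowd R 0 l1 ω) * (M.Yd R k 1 ω i l2 - M.YbarRowd R 1 l2 ω)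

/-- The variance-corrected estimator `Θ̂^{(d)}_{i,j}` (temporal covariances unknown). -/
def Θhatd (i j : Fin M.p) (ω : M.Ω) : ℝ :=
  M.θhatd R b 0 i j ω + M.θhatd R b 1 i j ω
    - (2 / (M.n * M.q : ℝ))
      * (M.ϱhatd R b i i ω * M.ϱhatd R b j j ω + M.ϱhatd R b i j ω * M.ϱhatd R b j i ω)
      * ((M.q : ℝ) * frobSq (M.Phatd R ω) / (Matrix.trace (M.Phatd R ω)) ^ 2)

/-- `ρ̂_{S_t,i,j}` in the data-driven case. -/
def ρShatd (t : Fin 2) (i j : Fin M.p) (ω : M.Ω) : ℝ :=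
  M.rhatd R b t i j ω / Real.sqrt (M.rhatd R b t i i ω * M.rhatd R b t j j ω)

/-- The paired-test statistic `W_{i,j}` in the data-driven case. -/
def Wd (i j : Fin M.p) (ω : M.Ω) : ℝ :=
  (M.ρShatd R b 0 i j ω - M.ρShatd R b 1 i j ω) / Real.sqrt (M.Θhatd R b i j ω)

/-- The column-precision matrices `(ω̂^{(t,d)}_{l,i,j}) = [Cov(X^{(t)} Σ̂_{T_t}^{-1/2})]⁻¹`. -/
def Ωhatd (t : Fin 2) (l : Fin M.q) : Matrix (Fin M.p) (Fin M.p) ℝ :=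
  (Matrix.of fun i j =>
    cov M.μ (fun ω => M.Yd R ⟨0, M.npos⟩ t ω i l) (fun ω => M.Yd R ⟨0, M.npos⟩ t ω j l))⁻¹

/-- The sparsity level `s_{p,q}`. -/
def sPQ : ℕ :=
  ⨆ t : Fin 2, ⨆ l : Fin M.q, ⨆ i : Fin M.p,
    ∑ j, max (if M.ΩS t i j ≠ 0 then 1 else 0) (if M.Ωhatd R t l i j ≠ 0 then 1 else 0)

/-- `log max(p, q, n)`. -/
def logMaxPQN : ℝ := Real.log (max (max M.p M.q) M.n)

/-- The rate `r^{(1)}_{n,p,q,t}` of assumption (A7). -/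
def rate1 (t : Fin 2) : ℝ :=
  ((M.sPQ R : ℝ) * M.q * (M.logMaxPQN) ^ ((3 : ℝ) / 2) * (L1norm (M.ΩS t)) ^ 2)⁻¹

/-- The rate `r^{(2)}_{n,p,q,t}` of assumption (A7). -/
def rate2 (t : Fin 2) : ℝ :=
  ((M.n * M.q : ℝ) * (M.sPQ R : ℝ) ^ 2 * Real.log M.p * (M.logMaxPQN) ^ 2) ^ (-(1 : ℝ) / 4)
    * ((M.q : ℝ) * (L1norm (M.ΩS t)) ^ 2)⁻¹

/-- `min_t min(r^{(1)}_{n,p,q,t}, r^{(2)}_{n,p,q,t})`. -/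
def rateMin : ℝ :=
  min (min (M.rate1 R 0) (M.rate2 R 0)) (min (M.rate1 R 1) (M.rate2 R 1))

end DataDriven

/-- Mean of the true errors. -/
def εbar (t : Fin 2) (i : Fin M.p) (ω : M.Ω) : ℝ :=
  (1 / (M.n * M.q : ℝ)) * ∑ k, ∑ l, M.ε k t i l ω

/-- `σ̂^{(t)}_{i,i,ε}`, the empirical variance of the true errors. -/
def σhatε (t : Fin 2) (i : Fin M.p) (ω : M.Ω) : ℝ :=
  (1 / (M.n * M.q : ℝ)) * ∑ k, ∑ l, (M.ε k t i l ω - M.εbar t i ω) ^ 2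

/-- `R̃^{(t)}_{i,j}`, the empirical covariance of the true errors. -/
def Rtil (t : Fin 2) (i j : Fin M.p) (ω : M.Ω) : ℝ :=
  (1 / (M.n * M.q : ℝ)) * ∑ k, ∑ l,
    (M.ε k t i l ω - M.εbar t i ω) * (M.ε k t j l ω - M.εbar t j ω)

/-- The set of true nulls `H₀`. -/
def H0fin : Finset (Fin M.p × Fin M.p) :=
  Finset.univ.filter fun pr => pr.1 < pr.2 ∧ M.ρS 0 pr.1 pr.2 = M.ρS 1 pr.1 pr.2

/-- `ℓ₀ = |H₀|`. -/
def ell0 : ℕ := M.H0fin.card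

/-- All pairs `(i, j)` with `i < j`. -/
def allPairs : Finset (Fin M.p × Fin M.p) :=
  Finset.univ.filter fun pr => pr.1 < pr.2

/-- `ℓ = (p² − p)/2` as a real number. -/
def ellR : ℝ := ((M.p : ℝ) ^ 2 - M.p) / 2

/-- The set `A_τ` of pairs with non-negligible precision entries. -/
def Atau (τ : ℝ) : Finset (Fin M.p × Fin M.p) :=
  Finset.univ.filter fun pr => pr.1 < pr.2 ∧
    ((Real.log M.p) ^ (-(2 : ℝ) - τ) ≤ |M.ΩS 0 pr.1 pr.2| ∨
      (Real.log M.p) ^ (-(2 : ℝ) - τ) ≤ |M.ΩS 1 pr.1 pr.2|)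

/-- Cardinality of the signal set `S(η)` of assumption (A4). -/
def Scard (η : ℝ) : ℕ :=
  (Finset.univ.filter fun pr : Fin M.p × Fin M.p => pr.1 < pr.2 ∧
    (Real.log M.p) ^ ((1 : ℝ) / 2 + η)
      ≤ |M.ρS 0 pr.1 pr.2 - M.ρS 1 pr.1 pr.2| / Real.sqrt (M.Θ pr.1 pr.2)).card

/-- Number of rejections at threshold `h` for a generic statistic `Wf`. -/
def rejections (Wf : Fin M.p → Fin M.p → M.Ω → ℝ) (h : ℝ) (ω : M.Ω) : ℕ :=
  (M.allPairs.filter fun pr => h ≤ |Wf pr.1 pr.2 ω|).card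

/-- False discovery proportion at threshold `h`. -/
def FDP (Wf : Fin M.p → Fin M.p → M.Ω → ℝ) (h : ℝ) (ω : M.Ω) : ℝ :=
  ((M.H0fin.filter fun pr => h ≤ |Wf pr.1 pr.2 ω|).card : ℝ)
    / max (M.rejections Wf h ω : ℝ) 1

/-- Estimated false discovery proportion `F̂DP(h)`. -/
def FDPhat (Wf : Fin M.p → Fin M.p → M.Ω → ℝ) (h : ℝ) (ω : M.Ω) : ℝ :=
  2 * (1 - Phi h) * (((M.p : ℝ) ^ 2 - M.p) / 2) / max (M.rejections Wf h ω : ℝ) 1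

open Classical in
/-- The data-driven threshold `ĥ_α`. -/
def hhat (Wf : Fin M.p → Fin M.p → M.Ω → ℝ) (α : ℝ) (ω : M.Ω) : ℝ :=
  if h : {h : ℝ | 0 ≤ h ∧ h ≤ 2 * Real.sqrt (Real.log M.p) ∧ M.FDPhat Wf h ω ≤ α}.Nonempty
  then sInf {h : ℝ | 0 ≤ h ∧ h ≤ 2 * Real.sqrt (Real.log M.p) ∧ M.FDPhat Wf h ω ≤ α}
  else 2 * Real.sqrt (Real.log M.p)

/-- `FDP(ĥ_α)`. -/
def FDPsel (Wf : Fin M.p → Fin M.p → M.Ω → ℝ) (α : ℝ) (ω : M.Ω) : ℝ :=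
  M.FDP Wf (M.hhat Wf α ω) ω

/-- `FDR(ĥ_α) = E[FDP(ĥ_α)]`. -/
def FDRsel (Wf : Fin M.p → Fin M.p → M.Ω → ℝ) (α : ℝ) : ℝ :=
  ∫ ω, M.FDPsel Wf α ω ∂M.μ

/-- `Z_{k,m,l}` for the pair `pr = (i_m, j_m)`. -/
def Zr (k : Fin M.n) (pr : Fin M.p × Fin M.p) (l : Fin M.q) (ω : M.Ω) : ℝ :=
  (M.ε k 1 pr.1 l ω * M.ε k 1 pr.2 l ω - M.ε k 0 pr.1 l ω * M.ε k 0 pr.2 l ω)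
    - ∫ ω', (M.ε k 1 pr.1 l ω' * M.ε k 1 pr.2 l ω'
        - M.ε k 0 pr.1 l ω' * M.ε k 0 pr.2 l ω') ∂M.μ

/-- The truncation level `τ_n = 32 log(p + nq)`. -/
def τn : ℝ := 32 * Real.log ((M.p : ℝ) + M.n * M.q)

/-- `Θ_m = Var(ε^{(1)}_{k,i_m,l} ε^{(1)}_{k,j_m,l} − ε^{(2)}_{k,i_m,l} ε^{(2)}_{k,j_m,l})`. -/
def Θm (pr : Fin M.p × Fin M.p) : ℝ :=
  ProbabilityTheory.variance (fun ω =>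
    M.ε ⟨0, M.npos⟩ 0 pr.1 ⟨0, M.qpos⟩ ω * M.ε ⟨0, M.npos⟩ 0 pr.2 ⟨0, M.qpos⟩ ω
      - M.ε ⟨0, M.npos⟩ 1 pr.1 ⟨0, M.qpos⟩ ω * M.ε ⟨0, M.npos⟩ 1 pr.2 ⟨0, M.qpos⟩ ω) M.μ

/-- Truncated `Z`. -/
def Ztrunc (k : Fin M.n) (pr : Fin M.p × Fin M.p) (l : Fin M.q) (ω : M.Ω) : ℝ :=
  if |M.Zr k pr l ω| ≤ M.τn then M.Zr k pr l ω else 0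

/-- `Ẑ_{k,m,l}`, the centered truncation of `Z_{k,m,l}`. -/
def Zhat (k : Fin M.n) (pr : Fin M.p × Fin M.p) (l : Fin M.q) (ω : M.Ω) : ℝ :=
  M.Ztrunc k pr l ω - ∫ ω', M.Ztrunc k pr l ω' ∂M.μ

/-- `V_m`. -/
def Vm (pr : Fin M.p × Fin M.p) (ω : M.Ω) : ℝ :=
  (Real.sqrt ((M.n * M.q : ℝ) * M.Θm pr))⁻¹ * ∑ k, ∑ l, M.Zr k pr l ω

/-- `V̂_m`. -/
def Vhatm (pr : Fin M.p × Fin M.p) (ω : M.Ω) : ℝ :=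
  (Real.sqrt ((M.n * M.q : ℝ) * M.Θm pr))⁻¹ * ∑ k, ∑ l, M.Zhat k pr l ω

/-- Row-pooled means of the raw data. -/
def XbarRow (t : Fin 2) (l : Fin M.q) (ω : M.Ω) : ℝ :=
  (1 / (M.n * M.p : ℝ)) * ∑ k, ∑ i, M.X k t ω i l

/-- The pooled sample cross-temporal covariance `Σ̂_{T_{1,2}}`. -/
def ShatT12 (ω : M.Ω) : Matrix (Fin M.q) (Fin M.q) ℝ :=
  Matrix.of fun l1 l2 =>
    (1 / (M.n * M.p : ℝ)) * ∑ k, ∑ i,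
      (M.X k 0 ω i l1 - M.XbarRow 0 l1 ω) * (M.X k 1 ω i l2 - M.XbarRow 1 l2 ω)

end PairedModel

/-- `F ν = o_p(a ν)` along a sequence of models. -/
def SeqLittleOP (M : ℕ → PairedModel) (F : ∀ ν, (M ν).Ω → ℝ) (a : ℕ → ℝ) : Prop :=
  ∀ ε : ℝ, 0 < ε →
    Tendsto (fun ν => (M ν).μ {ω | ε * |a ν| < |F ν ω|}) atTop (nhds 0)

/-- `F ν = O_p(a ν)` along a sequence of models. -/
def SeqBigOP (M : ℕ → PairedModel) (F : ∀ ν, (M ν).Ω → ℝ) (a : ℕ → ℝ) : Prop :=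
  ∀ ε : ℝ, 0 < ε → ∃ C : ℝ, 0 < C ∧
    ∀ᶠ ν in atTop, (M ν).μ {ω | C * |a ν| < |F ν ω|} ≤ ENNReal.ofReal ε

/-- The dimensions diverge along the sequence of models. -/
def DimsTendsto (M : ℕ → PairedModel) : Prop :=
  Tendsto (fun ν => (M ν).n) atTop atTop ∧ Tendsto (fun ν => (M ν).p) atTop atTop ∧
    Tendsto (fun ν => (M ν).q) atTop atTop

/-- Assumption (A2): `|A_τ ∩ H₀| = o(p^ν)` for every `ν > 0`. -/
def A2seq (M : ℕ → PairedModel) (τ : ℝ) : Prop :=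
  ∀ e : ℝ, 0 < e →
    Tendsto (fun k => ((((M k).Atau τ) ∩ (M k).H0fin).card : ℝ) / ((M k).p : ℝ) ^ e)
      atTop (nhds 0)

/-- Assumption (A3): `log p = o((nq)^{1/5})` and `q = o(np/(log p)²)`. -/
def A3seq (M : ℕ → PairedModel) : Prop :=
  Tendsto (fun ν => Real.log ((M ν).p) / (((M ν).n * (M ν).q : ℝ)) ^ ((1 : ℝ) / 5))
      atTop (nhds 0) ∧
  Tendsto (fun ν => ((M ν).q : ℝ) * (Real.log ((M ν).p)) ^ 2 / (((M ν).n : ℝ) * (M ν).p))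
      atTop (nhds 0)

/-- Assumption (A4): the number of strong signals is at least
`[((8π)^{1/2} α)⁻¹ + δ](log log p)^{1/2}`. -/
def A4seq (M : ℕ → PairedModel) (α : ℝ) : Prop :=
  ∃ η δ : ℝ, 0 < η ∧ 0 < δ ∧ ∀ ν,
    (1 / (Real.sqrt (8 * Real.pi) * α) + δ) * Real.sqrt (Real.log (Real.log ((M ν).p)))
      ≤ ((M ν).Scard η : ℝ)

/-- Assumption (A5)/(A6): rates of the regression coefficient estimators. -/
def A5seq (M : ℕ → PairedModel)
    (b : ∀ ν, Fin 2 → Fin (M ν).p → (M ν).Ω → Fin (M ν).p → ℝ) : Prop :=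
  ∀ t : Fin 2,
    SeqLittleOP M
      (fun ν ω => ⨆ i, ∑ j ∈ Finset.univ.erase i, |b ν t i ω j - (M ν).β t i j|)
      (fun ν => ((M ν).logMaxPQN)⁻¹) ∧
    SeqLittleOP M
      (fun ν ω => ⨆ i, Real.sqrt (∑ j ∈ Finset.univ.erase i, (b ν t i ω j - (M ν).β t i j) ^ 2))
      (fun ν => (((M ν).n * (M ν).q : ℝ) * Real.log ((M ν).p)) ^ (-(1 : ℝ) / 4))

/-- Assumption (A7): rate of the estimator of `Σ_{T_t}^{-1/2}`. -/
def A7seq (M : ℕ → PairedModel)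
    (R : ∀ ν, Fin 2 → (M ν).Ω → Matrix (Fin (M ν).q) (Fin (M ν).q) ℝ) : Prop :=
  ∃ c : ℝ, 0 < c ∧ ∃ rr : ℕ → ℝ,
    (∀ t : Fin 2, SeqLittleOP M
        (fun ν ω => ⨆ l1, ⨆ l2, |R ν t ω l1 l2 - c * (M ν).invSqrtT t l1 l2|) rr) ∧
    Tendsto (fun ν => rr ν / (M ν).rateMin (R ν)) atTop (nhds 0)


/-!
Each regression error is a fixed linear functional of the Gaussian vector
`(vec X⁽¹⁾, vec X⁽²⁾)`: `ε⁽ᵗ⁾_{k,i,l} = ω_{ii}⁻¹ Σⱼ ω_{ij} (X⁽ᵗ⁾ Σ_{T_t}^{-1/2})_{j,l}`, whose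
coefficient vector is the Kronecker product of the scaled `i`-th row of `Ω_{S_t}` and the `l`-th
column of `Σ_{T_t}^{-1/2}`, placed in block `t`. The covariance of two such functionals is the
bilinear form of the covariance matrix, and on Kronecker blocks it splits into a spatial factor
`(Ω_{S_1} Σ_{S_{1,2}} Ω_{S_2})_{i,j}/(ω_{ii} ω_{jj})` and the temporal factor
`(Σ_{T_1}^{-1/2} Σ_{T_{1,2}} Σ_{T_2}^{-1/2})_{l₁,l₂}`. On a diagonal block the same computation
gives `Var ε = 1/ω_{ii}`, because `Ω Σ Ω = Ω` and `Σ_T^{-1/2} Σ_T Σ_T^{-1/2} = I`.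
-/

section Development

open MeasureTheory ProbabilityTheory

lemma cov_eq_covariance {Ω : Type*} [MeasurableSpace Ω] (μ : Measure Ω) (f g : Ω → ℝ) :
    cov μ f g = cov[f, g; μ] := rfl

section BilinearForms

variable {ι : Type*} [Fintype ι] {C : Matrix ι ι ℝ}

lemma sum_sum_mul_mul_eq_dotProduct_mulVec (a b : ι → ℝ) :
    ∑ i, ∑ j, a i * C i j * b j = a ⬝ᵥ C *ᵥ b := by
  simp only [dotProduct, mulVec, Finset.mul_sum, mul_assoc]

lemma Matrix.IsHermitian.dotProduct_mulVec_comm (hC : C.IsHermitian) (a b : ι → ℝ) :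
    b ⬝ᵥ C *ᵥ a = a ⬝ᵥ C *ᵥ b := by
  rw [dotProduct_mulVec, dotProduct_comm, ← vecMul_transpose,
    ← conjTranspose_eq_transpose_of_trivial, hC.eq]

lemma sum_sum_mul_kronecker_mul {p q : ℕ} (A : Matrix (Fin p) (Fin p) ℝ)
    (B : Matrix (Fin q) (Fin q) ℝ) (u u' : Fin p → ℝ) (v v' : Fin q → ℝ) :
    ∑ x : Fin p × Fin q, ∑ y : Fin p × Fin q,
        u x.1 * v x.2 * (A x.1 y.1 * B x.2 y.2) * (u' y.1 * v' y.2)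
      = (u ⬝ᵥ A *ᵥ u') * (v ⬝ᵥ B *ᵥ v') := by
  rw [← sum_sum_mul_mul_eq_dotProduct_mulVec (C := A),
    ← sum_sum_mul_mul_eq_dotProduct_mulVec (C := B), Finset.sum_mul_sum, Fintype.sum_prod_type]
  refine Finset.sum_congr rfl fun j _ => Finset.sum_congr rfl fun m _ => ?_
  rw [Fintype.sum_prod_type, Finset.sum_mul_sum]
  refine Finset.sum_congr rfl fun j' _ => Finset.sum_congr rfl fun m' _ => ?_
  ring

lemma smul_row_dotProduct_mulVec_smul_row {p : ℕ} (A B C : Matrix (Fin p) (Fin p) ℝ)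
    (hC : Cᵀ = C) (a b : ℝ) (i j : Fin p) :
    (a • A i) ⬝ᵥ B *ᵥ (b • C j) = a * b * (A * B * C) i j := by
  rw [smul_dotProduct, mulVec_smul, dotProduct_smul, mul_mul_apply, hC, smul_eq_mul, smul_eq_mul]
  ring

end BilinearForms

namespace Matrix.PosSemidef

variable {n : Type*} [Fintype n] [DecidableEq n] {A : Matrix n n ℝ}

lemma isHermitian_sqrt (hA : A.PosSemidef) : hA.sqrt.IsHermitian := by
  rw [IsHermitian, sqrt, conjTranspose_mul, conjTranspose_mul, diagonal_conjTranspose]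
  simp [Matrix.mul_assoc, star_eq_conjTranspose]

lemma sqrt_mul_self (hA : A.PosSemidef) : hA.sqrt * hA.sqrt = A := by
  have hD : diagonal (Real.sqrt ∘ hA.1.eigenvalues) * diagonal (Real.sqrt ∘ hA.1.eigenvalues)
      = diagonal (RCLike.ofReal ∘ hA.1.eigenvalues) := by
    rw [diagonal_mul_diagonal]
    congr 1
    funext i
    simp [Real.mul_self_sqrt (hA.eigenvalues_nonneg i)]
  conv_rhs => rw [hA.1.spectral_theorem, Unitary.conjStarAlgAut_apply, ← hD]
  simp only [sqrt, Matrix.mul_assoc]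
  rw [← Matrix.mul_assoc (star _ : Matrix n n ℝ) _ _, Matrix.UnitaryGroup.star_mul_self,
    Matrix.one_mul]

end Matrix.PosSemidef

namespace IsCenteredGaussianFamily

variable {Ω ι : Type*} [MeasurableSpace Ω] {μ : Measure Ω} [Fintype ι] {Z : ι → Ω → ℝ}
  {C : Matrix ι ι ℝ} (hG : IsCenteredGaussianFamily μ Z C)
include hG

lemma map_sum (a : ι → ℝ) :
    μ.map (fun ω => ∑ i, a i * Z i ω) = gaussianReal 0 (a ⬝ᵥ C *ᵥ a).toNNReal := by
  rw [hG a, sum_sum_mul_mul_eq_dotProduct_mulVec]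

lemma aemeasurable_sum (a : ι → ℝ) : AEMeasurable (fun ω => ∑ i, a i * Z i ω) μ := by
  by_contra h
  have h0 := hG.map_sum a
  rw [Measure.map_of_not_aemeasurable h] at h0
  exact IsProbabilityMeasure.ne_zero (gaussianReal _ _) h0.symm

lemma memLp_sum (a : ι → ℝ) : MemLp (fun ω => ∑ i, a i * Z i ω) 2 μ := by
  have h := memLp_id_gaussianReal (μ := 0) (v := (a ⬝ᵥ C *ᵥ a).toNNReal) 2
  rw [← hG.map_sum a, memLp_map_measure_iff aestronglyMeasurable_id (hG.aemeasurable_sum a)] at h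
  exact_mod_cast h

lemma variance_sum (hC : C.PosSemidef) (a : ι → ℝ) :
    Var[fun ω => ∑ i, a i * Z i ω; μ] = a ⬝ᵥ C *ᵥ a := by
  have h := variance_map (X := id) aemeasurable_id (hG.aemeasurable_sum a)
  rw [hG.map_sum a, variance_id_gaussianReal,
    Real.coe_toNNReal _ (by simpa using hC.dotProduct_mulVec_nonneg a)] at h
  exact h.symm

lemma covariance_sum [IsFiniteMeasure μ] (hC : C.PosSemidef) (a b : ι → ℝ) :
    cov[fun ω => ∑ i, a i * Z i ω, fun ω => ∑ i, b i * Z i ω; μ] = a ⬝ᵥ C *ᵥ b := by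
  have h := variance_add (hG.memLp_sum a) (hG.memLp_sum b)
  have hab : ((fun ω => ∑ i, a i * Z i ω) + fun ω => ∑ i, b i * Z i ω)
      = fun ω => ∑ i, (a + b) i * Z i ω := by
    ext ω
    simp only [Pi.add_apply, add_mul, Finset.sum_add_distrib]
  rw [hab, hG.variance_sum hC, hG.variance_sum hC, hG.variance_sum hC, add_dotProduct,
    mulVec_add, dotProduct_add, dotProduct_add, hC.isHermitian.dotProduct_mulVec_comm a b] at h
  linarith

end IsCenteredGaussianFamily

section BlockCoef

variable {p q : ℕ}

/-- The coefficient vector of the functional `X ↦ uᵀ X⁽ᵗ⁾ v` in the stacked coordinates of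
`pairCov`. -/
def blockCoef (t : Fin 2) (u : Fin p → ℝ) (v : Fin q → ℝ) : Fin 2 × Fin p × Fin q → ℝ :=
  fun x => if x.1 = t then u x.2.1 * v x.2.2 else 0

lemma sum_blockCoef_mul (t : Fin 2) (u : Fin p → ℝ) (v : Fin q → ℝ)
    (F : Fin 2 → Fin p → Fin q → ℝ) :
    ∑ x, blockCoef t u v x * F x.1 x.2.1 x.2.2 = ∑ j, ∑ m, u j * v m * F t j m := by
  rw [Fintype.sum_prod_type, Finset.sum_eq_single t (fun s _ hs => by simp [blockCoef, hs])
    (by simp), Fintype.sum_prod_type]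
  simp [blockCoef]

lemma blockCoef_dotProduct_pairCov_mulVec_blockCoef (S : Fin 2 → Matrix (Fin p) (Fin p) ℝ)
    (S12 : Matrix (Fin p) (Fin p) ℝ) (T : Fin 2 → Matrix (Fin q) (Fin q) ℝ)
    (T12 : Matrix (Fin q) (Fin q) ℝ) (t : Fin 2) (u u' : Fin p → ℝ) (v v' : Fin q → ℝ) :
    blockCoef t u v ⬝ᵥ pairCov (S 0) (S 1) S12 (T 0) (T 1) T12 *ᵥ blockCoef t u' v'
      = (u ⬝ᵥ S t *ᵥ u') * (v ⬝ᵥ T t *ᵥ v') := by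
  rw [← sum_sum_mul_kronecker_mul, ← sum_sum_mul_mul_eq_dotProduct_mulVec]
  fin_cases t <;> simp [blockCoef, pairCov, Fintype.sum_prod_type, Fin.sum_univ_two]

lemma blockCoef_zero_dotProduct_pairCov_mulVec_blockCoef_one
    (S1 S2 S12 : Matrix (Fin p) (Fin p) ℝ) (T1 T2 T12 : Matrix (Fin q) (Fin q) ℝ)
    (u u' : Fin p → ℝ) (v v' : Fin q → ℝ) :
    blockCoef 0 u v ⬝ᵥ pairCov S1 S2 S12 T1 T2 T12 *ᵥ blockCoef 1 u' v'
      = (u ⬝ᵥ S12 *ᵥ u') * (v ⬝ᵥ T12 *ᵥ v') := by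
  rw [← sum_sum_mul_kronecker_mul, ← sum_sum_mul_mul_eq_dotProduct_mulVec]
  simp [blockCoef, pairCov, Fintype.sum_prod_type, Fin.sum_univ_two]

end BlockCoef

namespace PairedModel

variable (M : PairedModel)

lemma ΩS_posDef (t : Fin 2) : (M.ΩS t).PosDef := (M.hSigS t).inv

lemma ΩS_transpose (t : Fin 2) : (M.ΩS t)ᵀ = M.ΩS t := by
  rw [← conjTranspose_eq_transpose_of_trivial, (M.ΩS_posDef t).isHermitian.eq]

lemma ΩS_mul_SigS (t : Fin 2) : M.ΩS t * M.SigS t = 1 :=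
  nonsing_inv_mul _ (M.hSigS t).det_pos.ne'.isUnit

lemma r_self (t : Fin 2) (i : Fin M.p) : M.r t i i = (M.ΩS t i i)⁻¹ := by
  rw [r, div_mul_cancel_left₀ (M.ΩS_posDef t).diag_pos.ne']

lemma invSqrtT_transpose (t : Fin 2) : (M.invSqrtT t)ᵀ = M.invSqrtT t := by
  rw [invSqrtT, transpose_nonsing_inv, ← conjTranspose_eq_transpose_of_trivial,
    (M.hSigT t).posSemidef.isHermitian_sqrt.eq]

lemma invSqrtT_mul_SigT_mul_invSqrtT (t : Fin 2) :
    M.invSqrtT t * M.SigT t * M.invSqrtT t = 1 := by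
  set S := (M.hSigT t).posSemidef.sqrt
  have hS : S * S = M.SigT t := (M.hSigT t).posSemidef.sqrt_mul_self
  have hdet : IsUnit S.det := by
    refine (left_ne_zero_of_mul (b := S.det) ?_).isUnit
    rw [← det_mul, hS]
    exact (M.hSigT t).det_pos.ne'
  show S⁻¹ * M.SigT t * S⁻¹ = 1
  rw [← hS, ← Matrix.mul_assoc, nonsing_inv_mul _ hdet, Matrix.one_mul, mul_nonsing_inv _ hdet]

lemma ε_eq_sum_ΩS_mul_Y (k : Fin M.n) (t : Fin 2) (i : Fin M.p) (l : Fin M.q) (ω : M.Ω) :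
    M.ε k t i l ω = ∑ j, (M.ΩS t i i)⁻¹ * M.ΩS t i j * M.Y k t ω j l := by
  have hii : M.ΩS t i i ≠ 0 := (M.ΩS_posDef t).diag_pos.ne'
  rw [ε, ← Finset.add_sum_erase _ _ (Finset.mem_univ i), inv_mul_cancel₀ hii, one_mul,
    sub_eq_add_neg, ← Finset.sum_neg_distrib]
  congr 1
  refine Finset.sum_congr rfl fun j _ => ?_
  rw [β]
  ring

lemma ε_eq_sum_blockCoef (k : Fin M.n) (t : Fin 2) (i : Fin M.p) (l : Fin M.q) :
    M.ε k t i l = fun ω => ∑ x, blockCoef t ((M.ΩS t i i)⁻¹ • M.ΩS t i) ((M.invSqrtT t)ᵀ l) x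
      * M.X k x.1 ω x.2.1 x.2.2 := by
  ext ω
  rw [ε_eq_sum_ΩS_mul_Y, sum_blockCoef_mul t _ _ fun s j m => M.X k s ω j m]
  refine Finset.sum_congr rfl fun j _ => ?_
  simp only [Y, mul_apply, Finset.mul_sum, Pi.smul_apply, smul_eq_mul, transpose_apply]
  refine Finset.sum_congr rfl fun m _ => ?_
  ring

lemma covariance_ε (k : Fin M.n) (i j : Fin M.p) (l1 l2 : Fin M.q) :
    cov[M.ε k 0 i l1, M.ε k 1 j l2; M.μ]
      = (M.ΩS 0 i i)⁻¹ * (M.ΩS 1 j j)⁻¹ * (M.ΩS 0 * M.SigS12 * M.ΩS 1) i j * M.PT12 l1 l2 := by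
  rw [ε_eq_sum_blockCoef, ε_eq_sum_blockCoef, (M.gaussX k).covariance_sum M.hSig,
    blockCoef_zero_dotProduct_pairCov_mulVec_blockCoef_one,
    smul_row_dotProduct_mulVec_smul_row _ _ _ (M.ΩS_transpose 1), ← mul_mul_apply,
    M.invSqrtT_transpose 0, PT12]

lemma variance_ε (k : Fin M.n) (t : Fin 2) (i : Fin M.p) (l : Fin M.q) :
    Var[M.ε k t i l; M.μ] = (M.ΩS t i i)⁻¹ := by
  rw [ε_eq_sum_blockCoef, (M.gaussX k).variance_sum M.hSig,
    blockCoef_dotProduct_pairCov_mulVec_blockCoef M.SigS,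
    smul_row_dotProduct_mulVec_smul_row _ _ _ (M.ΩS_transpose t), ← mul_mul_apply,
    M.invSqrtT_transpose t, M.invSqrtT_mul_SigT_mul_invSqrtT, ΩS_mul_SigS, Matrix.one_mul,
    one_apply_eq, mul_one, inv_mul_cancel_right₀ (M.ΩS_posDef t).diag_pos.ne']

end PairedModel

end Development

/-- The cross-sample error covariance factorizes into a temporal factor `P_{T_{1,2},l₁,l₂}`
and a spatial factor. -/
theorem statement_2 (M : PairedModel) (i' j' : Fin M.p) (l1 l2 : Fin M.q) (k : Fin M.n) :
    cov M.μ (M.ε k 0 i' l1) (M.ε k 1 j' l2)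
        = M.PT12 l1 l2 * (∑ a, ∑ b, M.ΩS 0 i' a * M.SigS12 a b * M.ΩS 1 b j')
            / (M.ΩS 0 i' i' * M.ΩS 1 j' j') ∧
    corr M.μ (M.ε k 0 i' l1) (M.ε k 1 j' l2) = M.PT12 l1 l2 * M.ρS12 i' j' := by
  have hQ : ∑ a, ∑ b, M.ΩS 0 i' a * M.SigS12 a b * M.ΩS 1 b j'
      = (M.ΩS 0 * M.SigS12 * M.ΩS 1) i' j' := by
    rw [mul_mul_apply, sum_sum_mul_mul_eq_dotProduct_mulVec]
    rfl
  have hcov := M.covariance_ε k i' j' l1 l2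
  constructor
  · rw [cov_eq_covariance, hcov, hQ, div_eq_mul_inv, mul_inv]
    ring
  · rw [corr, cov_eq_covariance, hcov, M.variance_ε, M.variance_ε, PairedModel.ρS12,
      M.r_self, M.r_self, hQ, mul_assoc ((M.ΩS 0 i' i')⁻¹ * (M.ΩS 1 j' j')⁻¹),
      mul_div_right_comm, Real.div_sqrt]
    ring

end
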